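/- Let c ∈ (0, 1/2) and let f : {-1,1}^n → {-1,1} satisfy H[f] ≥ cn. Then I[f] ≥ (c/(1+c))·h⁻¹(c²)·n, where h⁻¹ is the inverse of the binary entropy function on [0,1/2]; consequently H[f] ≤ ((1+c)/h⁻¹(c²))·I[f]. -/

import Mathlib

/-!
Gibbs' inequality against the `t`-biased weights `t ^ |S| * (1 - t) ^ (n - |S|)` bounds the
spectral entropy by `I * log₂ (1 / t) + (n - I) * log₂ (1 / (1 - t))`, which is nondecreasing in
`I = I[f]` for `t ≤ 1 / 2` and equals `n * h(t) = c² n` at `I = t n`. As `H[f] ≥ c n > c² n`, this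
forces `I[f] ≥ t n`, which is stronger than the first claim; the second follows from `H[f] ≤ n`,
the case `t = 1 / 2` of the same bound.
-/

open Finset Real

noncomputable def chi {n : ℕ} (S : Finset (Fin n)) (x : Fin n → Bool) : ℝ :=
  ∏ i ∈ S, (if x i then (1:ℝ) else -1)

noncomputable def coeff {n : ℕ} (f : (Fin n → Bool) → ℝ) (S : Finset (Fin n)) : ℝ :=
  (∑ x : Fin n → Bool, f x * chi S x) / 2 ^ n

noncomputable def spectralEntropy {n : ℕ} (f : (Fin n → Bool) → ℝ) : ℝ :=
  ∑ S : Finset (Fin n), (coeff f S) ^ 2 * Real.logb 2 (1 / (coeff f S) ^ 2)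

noncomputable def totalInfluence {n : ℕ} (f : (Fin n → Bool) → ℝ) : ℝ :=
  ∑ S : Finset (Fin n), (S.card : ℝ) * (coeff f S) ^ 2

noncomputable def minEntropy {n : ℕ} (f : (Fin n → Bool) → ℝ) : ℝ :=
  ⨅ S : Finset (Fin n), Real.logb 2 (1 / (coeff f S) ^ 2)

noncomputable def fVar {n : ℕ} (f : (Fin n → Bool) → ℝ) : ℝ := 1 - (coeff f ∅) ^ 2

def IsBoolean {n : ℕ} (f : (Fin n → Bool) → ℝ) : Prop := ∀ x, f x = 1 ∨ f x = -1

noncomputable def binEnt (x : ℝ) : ℝ :=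
  x * Real.logb 2 (1 / x) + (1 - x) * Real.logb 2 (1 / (1 - x))

noncomputable def l1Norm {n : ℕ} (f : (Fin n → Bool) → ℝ) : ℝ :=
  ∑ S : Finset (Fin n), |coeff f S|

noncomputable def tensor {n m : ℕ} (f : (Fin n → Bool) → ℝ) (g : (Fin m → Bool) → ℝ) :
    (Fin (n + m) → Bool) → ℝ :=
  fun x => f (fun i => x (Fin.castAdd m i)) * g (fun j => x (Fin.natAdd n j))

lemma sum_chi_mul_chi {n : ℕ} (x y : Fin n → Bool) :
    ∑ S : Finset (Fin n), chi S x * chi S y = if x = y then (2 : ℝ) ^ n else 0 := by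
  set e : Fin n → ℝ := fun i => (if x i then (1 : ℝ) else -1) * (if y i then 1 else -1)
  have hsum : ∑ S : Finset (Fin n), chi S x * chi S y = ∏ i, (1 + e i) := by
    simp only [prod_one_add, powerset_univ, chi, e, prod_mul_distrib]
  rw [hsum]
  split_ifs with hxy
  · subst hxy
    simp only [e]
    rw [prod_congr rfl fun i _ => show 1 + _ = (2 : ℝ) by split_ifs <;> norm_num]
    simp
  · obtain ⟨i, hi⟩ : ∃ i, x i ≠ y i := Function.ne_iff.mp hxy
    refine prod_eq_zero (mem_univ i) ?_
    cases hx : x i <;> cases hy : y i <;> simp_all [e]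

lemma sum_coeff_sq {n : ℕ} (f : (Fin n → Bool) → ℝ) :
    ∑ S : Finset (Fin n), coeff f S ^ 2 = (∑ x, f x ^ 2) / 2 ^ n := by
  have hexpand : ∀ S : Finset (Fin n), coeff f S ^ 2 =
      (∑ x, ∑ y, f x * f y * (chi S x * chi S y)) / (2 ^ n * 2 ^ n) := by
    intro S
    rw [coeff, div_pow, sq, sum_mul_sum, sq]
    congr 1
    exact sum_congr rfl fun x _ => sum_congr rfl fun y _ => by ring
  have horth : ∀ x, ∑ S : Finset (Fin n), ∑ y, f x * f y * (chi S x * chi S y)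
      = f x ^ 2 * 2 ^ n := by
    intro x
    rw [sum_comm]
    simp [← mul_sum, sum_chi_mul_chi, sq]
  rw [sum_congr rfl fun S _ => hexpand S, ← sum_div, sum_comm, sum_congr rfl fun x _ => horth x,
    ← sum_mul]
  field_simp

lemma sum_coeff_sq_of_isBoolean {n : ℕ} {f : (Fin n → Bool) → ℝ} (hf : IsBoolean f) :
    ∑ S : Finset (Fin n), coeff f S ^ 2 = 1 := by
  have hsq : ∀ x, f x ^ 2 = 1 := fun x => by rcases hf x with h | h <;> simp [h]
  simp [sum_coeff_sq, hsq]

lemma mul_log_div_le_sub {w q : ℝ} (hw : 0 ≤ w) (hq : 0 < q) : w * log (q / w) ≤ q - w := by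
  rcases hw.eq_or_lt with rfl | hw
  · simpa using hq.le
  · calc w * log (q / w) ≤ w * (q / w - 1) := by
          gcongr
          exact log_le_sub_one_of_pos (by positivity)
      _ = q - w := by field_simp

/-- Gibbs' inequality. -/
lemma sum_mul_logb_one_div_le {α : Type*} [Fintype α] {w q : α → ℝ} (hw : ∀ a, 0 ≤ w a)
    (hq : ∀ a, 0 < q a) (hw1 : ∑ a, w a = 1) (hq1 : ∑ a, q a ≤ 1) :
    ∑ a, w a * logb 2 (1 / w a) ≤ ∑ a, w a * logb 2 (1 / q a) := by
  have hdiff : ∀ a, w a * logb 2 (1 / w a) - w a * logb 2 (1 / q a)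
      = w a * log (q a / w a) / log 2 := by
    intro a
    rcases (hw a).eq_or_lt with h | h
    · simp [← h]
    · rw [logb, logb, log_div (hq a).ne' h.ne', one_div, one_div, log_inv, log_inv]
      ring
  have hlog2 : 0 < log 2 := log_pos one_lt_two
  suffices ∑ a, (w a * logb 2 (1 / w a) - w a * logb 2 (1 / q a)) ≤ 0 by
    rwa [sum_sub_distrib, sub_nonpos] at this
  calc ∑ a, (w a * logb 2 (1 / w a) - w a * logb 2 (1 / q a))
      ≤ ∑ a, (q a - w a) / log 2 := by
        simp only [hdiff]
        gcongr with a
        exact mul_log_div_le_sub (hw a) (hq a)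
    _ = (∑ a, q a - 1) / log 2 := by rw [← sum_div, sum_sub_distrib, hw1]
    _ ≤ 0 := div_nonpos_of_nonpos_of_nonneg (by linarith) hlog2.le

noncomputable def biasedWeight (n : ℕ) (t : ℝ) (S : Finset (Fin n)) : ℝ :=
  t ^ S.card * (1 - t) ^ (n - S.card)

lemma sum_biasedWeight (n : ℕ) (t : ℝ) : ∑ S : Finset (Fin n), biasedWeight n t S = 1 := by
  simpa [biasedWeight] using Fintype.sum_pow_mul_eq_add_pow (Fin n) t (1 - t)

lemma logb_one_div_biasedWeight {n : ℕ} {t : ℝ} (ht0 : 0 < t) (ht1 : t < 1)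
    (S : Finset (Fin n)) : logb 2 (1 / biasedWeight n t S)
      = S.card * logb 2 (1 / t) + (n - S.card) * logb 2 (1 / (1 - t)) := by
  have h1t : 0 < 1 - t := by linarith
  rw [biasedWeight, one_div, logb_inv, logb_mul (by positivity) (by positivity), logb_pow,
    logb_pow, one_div, one_div, logb_inv, logb_inv,
    Nat.cast_sub (by simpa using card_le_univ S)]
  ring

lemma spectralEntropy_le_totalInfluence_mul_logb {n : ℕ} {f : (Fin n → Bool) → ℝ}
    (hf : IsBoolean f) {t : ℝ} (ht0 : 0 < t) (ht1 : t < 1) :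
    spectralEntropy f ≤ totalInfluence f * logb 2 (1 / t)
      + (n - totalInfluence f) * logb 2 (1 / (1 - t)) := by
  have hW := sum_coeff_sq_of_isBoolean hf
  calc spectralEntropy f
      ≤ ∑ S : Finset (Fin n), coeff f S ^ 2 * logb 2 (1 / biasedWeight n t S) :=
        sum_mul_logb_one_div_le (fun _ => sq_nonneg _)
          (fun S => mul_pos (pow_pos ht0 _) (pow_pos (sub_pos.mpr ht1) _))
          hW (sum_biasedWeight n t).le
    _ = ∑ S : Finset (Fin n), (S.card * coeff f S ^ 2 * (logb 2 (1 / t) - logb 2 (1 / (1 - t)))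
          + coeff f S ^ 2 * (n * logb 2 (1 / (1 - t)))) := by
        simp only [logb_one_div_biasedWeight ht0 ht1]
        exact sum_congr rfl fun S _ => by ring
    _ = totalInfluence f * logb 2 (1 / t) + (n - totalInfluence f) * logb 2 (1 / (1 - t)) := by
        rw [sum_add_distrib, ← sum_mul, ← sum_mul, hW, totalInfluence]
        ring

lemma spectralEntropy_le_card {n : ℕ} {f : (Fin n → Bool) → ℝ} (hf : IsBoolean f) :
    spectralEntropy f ≤ n := by
  have h := spectralEntropy_le_totalInfluence_mul_logb hf (t := 1 / 2) (by norm_num) (by norm_num)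
  norm_num at h
  linarith

lemma spectralEntropy_le_of_totalInfluence_le {n : ℕ} {f : (Fin n → Bool) → ℝ}
    (hf : IsBoolean f) {t : ℝ} (ht0 : 0 < t) (ht1 : t ≤ 1 / 2)
    (hI : totalInfluence f ≤ t * n) : spectralEntropy f ≤ n * binEnt t := by
  have hlogb : logb 2 (1 / (1 - t)) ≤ logb 2 (1 / t) :=
    logb_le_logb_of_le one_lt_two (one_div_pos.mpr (by linarith))
      (one_div_le_one_div_of_le ht0 (by linarith))
  calc spectralEntropy f
      ≤ totalInfluence f * logb 2 (1 / t) + (n - totalInfluence f) * logb 2 (1 / (1 - t)) :=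
        spectralEntropy_le_totalInfluence_mul_logb hf ht0 (by linarith)
    _ ≤ t * n * logb 2 (1 / t) + (n - t * n) * logb 2 (1 / (1 - t)) := by
        nlinarith [mul_nonneg (sub_nonneg.mpr hI) (sub_nonneg.mpr hlogb)]
    _ = n * binEnt t := by rw [binEnt]; ring

lemma binEnt_zero : binEnt 0 = 0 := by simp [binEnt]

lemma totalInfluence_nonneg {n : ℕ} (f : (Fin n → Bool) → ℝ) : 0 ≤ totalInfluence f :=
  sum_nonneg fun _ _ => by positivity

theorem FEI_high_entropy (c : ℝ) (hc1 : 0 < c) (hc2 : c < 1 / 2)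
    {n : ℕ} (f : (Fin n → Bool) → ℝ) (hf : IsBoolean f)
    (hH : c * n ≤ spectralEntropy f)
    (t : ℝ) (ht0 : 0 ≤ t) (ht1 : t ≤ 1 / 2) (htc : binEnt t = c ^ 2) :
    (c / (1 + c)) * t * n ≤ totalInfluence f ∧
    spectralEntropy f ≤ ((1 + c) / t) * totalInfluence f := by
  have ht : 0 < t := ht0.lt_of_ne <| by
    rintro rfl
    rw [binEnt_zero] at htc
    exact (pow_pos hc1 2).ne htc
  have hIt : t * n ≤ totalInfluence f := by
    by_contra! hI
    have hn : (0 : ℝ) < n := pos_of_mul_pos_right ((totalInfluence_nonneg f).trans_lt hI) ht.le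
    have hHc := spectralEntropy_le_of_totalInfluence_le hf ht ht1 hI.le
    rw [htc] at hHc
    linarith [mul_pos (mul_pos hc1 (by linarith : 0 < 1 - c)) hn]
  have htn : 0 ≤ t * n := by positivity
  constructor
  · calc c / (1 + c) * t * n = c / (1 + c) * (t * n) := by ring
      _ ≤ t * n := mul_le_of_le_one_left htn ((div_le_one (by linarith)).mpr (by linarith))
      _ ≤ totalInfluence f := hIt
  · calc spectralEntropy f ≤ n := spectralEntropy_le_card hf
      _ ≤ (1 + c) * n := le_mul_of_one_le_left n.cast_nonneg (by linarith)
      _ = (1 + c) / t * (t * n) := by field_simp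
      _ ≤ (1 + c) / t * totalInfluence f := by gcongr
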